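/- arXiv:math/0210453 — 2 statements merged into one kernel-verified Lean document; each statement's English description precedes it below -/
import Mathlib

section
/- Let a ∈ [−3/2, −5/4] and r(x) = ax/(1+x). Define A(x) = x + r(x) + (1/r(x))∫_x^0 r(t)dt and B(x) = (1/r(x))∫_{−r(x)}^0 r(s)ds for x ≠ 0, A(0) = B(0) = 0, and D(x) = A(x) if r(x) < −x, D(x) = B(x) if r(x) ≥ −x; let R(x) = (A'(0))² x/(A'(0) − (A''(0)/2)x) with A'(0) = a + 1/2, A''(0) = −(2a+1/3). Then D(x) > R(x) for all x > 0. -/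
/-!
Integrating `r` gives `∫_y^0 r = a (log (1 + y) - y)`, so for `x > 0` both `A x` and `B x` are
increasing affine functions of a logarithm (`log (1 + x)`, resp. `log (1 + s)` with
`s = -r x ≥ 0`). Since `A'(0) - A''(0) x / 2 = (a + 1/2) + (a + 1/6) x < 0`, the claim
`R x < D x` says `D x · ((a + 1/2) + (a + 1/6) x) < (a + 1/2)² x`, and it suffices to prove this
with the logarithm replaced by its Padé lower bound `t (6 + 3t) / (6 + 6t + t²) ≤ log (1 + t)`.
What remains is rational: on `r x < -x` the defect is
`x³ ((1 + 18a) + (1 + 14a) x) / (12 (1 + x) (6 + 6x + x²)) < 0`; on `r x ≥ -x`, i.e.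
`x ≥ -(a + 1)`, it is a positive multiple of a quadratic in `x` that equals
`a² (a + 1)² (14a - 3) / 12 < 0` at `x = -(a + 1)` and decreases from there when
`a ∈ [-3/2, -5/4]`.
-/

open Real Set

theorem div_le_log_one_add_of_nonneg {x : ℝ} (hx : 0 ≤ x) :
    x * (6 + 3 * x) / (6 + 6 * x + x ^ 2) ≤ log (1 + x) := by
  set f : ℝ → ℝ := fun t ↦ log (1 + t) - t * (6 + 3 * t) / (6 + 6 * t + t ^ 2)
  have hf : ∀ t, 0 ≤ t → HasDerivAt f (t ^ 4 / ((1 + t) * (6 + 6 * t + t ^ 2) ^ 2)) t := by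
    intro t ht
    have hQ : 6 + 6 * t + t ^ 2 ≠ 0 := by positivity
    have h1t : 1 + t ≠ 0 := by positivity
    have hlog := ((hasDerivAt_id' t).const_add 1).log h1t
    have hnum := (hasDerivAt_id' t).fun_mul (((hasDerivAt_id' t).const_mul 3).const_add 6)
    have hden := (((hasDerivAt_id' t).const_mul 6).const_add 6).fun_add (hasDerivAt_pow 2 t)
    refine (hlog.fun_sub (hnum.fun_div hden hQ)).congr_deriv ?_
    field_simp
    ring
  have hmono : MonotoneOn f (Ici 0) :=
    monotoneOn_of_hasDerivWithinAt_nonneg (convex_Ici 0)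
      (fun t ht ↦ (hf t ht).continuousAt.continuousWithinAt)
      (fun t ht ↦ (hf t (interior_subset ht)).hasDerivWithinAt)
      (fun t ht ↦ by have : 0 ≤ t := interior_subset ht; positivity)
  simpa [f] using hmono self_mem_Ici hx hx

theorem integral_mul_div_one_add {a y : ℝ} (hy : -1 < y) :
    ∫ t in y..0, a * t / (1 + t) = a * (log (1 + y) - y) := by
  have hpos : ∀ t ∈ uIcc y 0, 0 < 1 + t := fun t ht ↦ by
    have := lt_of_lt_of_le (lt_min hy neg_one_lt_zero) ht.1
    linarith
  have hderiv : ∀ t ∈ uIcc y 0,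
      HasDerivAt (fun u ↦ a * (u - log (1 + u))) (a * t / (1 + t)) t := fun t ht ↦ by
    have hlog := ((hasDerivAt_id' t).const_add 1).log (hpos t ht).ne'
    refine (((hasDerivAt_id' t).fun_sub hlog).const_mul a).congr_deriv ?_
    field_simp [(hpos t ht).ne']
    ring
  have hint : IntervalIntegrable (fun t ↦ a * t / (1 + t)) MeasureTheory.volume y 0 :=
    (ContinuousOn.div (by fun_prop) (by fun_prop) fun t ht ↦ (hpos t ht).ne').intervalIntegrable
  rw [intervalIntegral.integral_eq_sub_of_hasDerivAt hderiv hint]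
  simp only [add_zero, log_one, sub_self, mul_zero, zero_sub]
  ring

section
variable {a x : ℝ}

theorem R_denom_neg (ha : a ≤ -1 / 2) (hx : 0 < x) : a + 1 / 2 + (a + 1 / 6) * x < 0 := by
  nlinarith

theorem A_mul_R_denom_lt (ha : a ≤ -1 / 2) (hx : 0 < x) :
    (x + a * x / (1 + x) + 1 / (a * x / (1 + x)) * (a * (log (1 + x) - x))) *
      (a + 1 / 2 + (a + 1 / 6) * x) < (a + 1 / 2) ^ 2 * x := by
  have ha0 : a ≠ 0 := by linarith
  have hA : ∀ l, 1 / (a * x / (1 + x)) * (a * (l - x)) = (1 + x) * (l - x) / x := fun l ↦ by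
    field_simp
  have hpoly : (1 + 18 * a) + (1 + 14 * a) * x < 0 := by nlinarith
  rw [hA]
  calc (x + a * x / (1 + x) + (1 + x) * (log (1 + x) - x) / x) * (a + 1 / 2 + (a + 1 / 6) * x)
      ≤ (x + a * x / (1 + x) + (1 + x) * (x * (6 + 3 * x) / (6 + 6 * x + x ^ 2) - x) / x) *
          (a + 1 / 2 + (a + 1 / 6) * x) := by
        refine mul_le_mul_of_nonpos_right ?_ (R_denom_neg ha hx).le
        gcongr
        exact div_le_log_one_add_of_nonneg hx.le
    _ = (a + 1 / 2) ^ 2 * x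
          + x ^ 3 * ((1 + 18 * a) + (1 + 14 * a) * x) / (12 * (1 + x) * (6 + 6 * x + x ^ 2)) := by
        field_simp
        ring
    _ < (a + 1 / 2) ^ 2 * x := by
        have := div_neg_of_neg_of_pos (mul_neg_of_pos_of_neg (pow_pos hx 3) hpoly)
          (by positivity : 0 < 12 * (1 + x) * (6 + 6 * x + x ^ 2))
        linarith

theorem B_numerator_neg (ha₁ : -(3 / 2) ≤ a) (ha₂ : a ≤ -(5 / 4)) (hx : -(a + 1) ≤ x) :
    a ^ 2 * (a * x - 3 * (1 + x)) * (a + 1 / 2 + (a + 1 / 6) * x)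
      - (a + 1 / 2) ^ 2 * (6 * (1 + x) ^ 2 - 6 * a * x * (1 + x) + a ^ 2 * x ^ 2) < 0 := by
  have hk₁ : a ^ 4 + a ^ 3 / 2 - 8 * a ^ 2 - 21 * a / 2 - 3 < 0 := by
    nlinarith [mul_nonneg (sub_nonneg.2 ha₁) (sub_nonneg.2 ha₂)]
  have hk₂ : 13 / 6 * a ^ 3 - 3 / 4 * a ^ 2 - 9 / 2 * a - 3 / 2 < 0 := by
    nlinarith [mul_nonneg (sub_nonneg.2 ha₁) (sub_nonneg.2 ha₂)]
  have hbase : a ^ 2 * (a + 1) ^ 2 * (14 * a - 3) / 12 < 0 :=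
    div_neg_of_neg_of_pos (mul_neg_of_pos_of_neg (by nlinarith) (by linarith)) (by norm_num)
  have hslope : (a ^ 4 + a ^ 3 / 2 - 8 * a ^ 2 - 21 * a / 2 - 3)
      + (13 / 6 * a ^ 3 - 3 / 4 * a ^ 2 - 9 / 2 * a - 3 / 2) * (x - (a + 1)) < 0 := by
    have := mul_nonpos_of_nonpos_of_nonneg hk₂.le (by linarith : 0 ≤ x - (a + 1))
    linarith
  -- expansion around the boundary point `x = -(a + 1)` of the region `r x ≥ -x`
  have hexpand : a ^ 2 * (a * x - 3 * (1 + x)) * (a + 1 / 2 + (a + 1 / 6) * x)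
      - (a + 1 / 2) ^ 2 * (6 * (1 + x) ^ 2 - 6 * a * x * (1 + x) + a ^ 2 * x ^ 2)
      = a ^ 2 * (a + 1) ^ 2 * (14 * a - 3) / 12 + (x + (a + 1)) *
          ((a ^ 4 + a ^ 3 / 2 - 8 * a ^ 2 - 21 * a / 2 - 3)
            + (13 / 6 * a ^ 3 - 3 / 4 * a ^ 2 - 9 / 2 * a - 3 / 2) * (x - (a + 1))) := by
    ring
  rw [hexpand]
  have := mul_nonpos_of_nonneg_of_nonpos (by linarith : 0 ≤ x + (a + 1)) hslope.le
  linarith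

theorem B_mul_R_denom_lt (ha₁ : -(3 / 2) ≤ a) (ha₂ : a ≤ -(5 / 4)) (hx : -(a + 1) ≤ x) :
    1 / (a * x / (1 + x)) * (a * (log (1 + -(a * x / (1 + x))) - -(a * x / (1 + x)))) *
      (a + 1 / 2 + (a + 1 / 6) * x) < (a + 1 / 2) ^ 2 * x := by
  have hx0 : 0 < x := by linarith
  have ha0 : a ≠ 0 := by linarith
  set s := -(a * x / (1 + x)) with hs
  set Q := 6 * (1 + x) ^ 2 - 6 * a * x * (1 + x) + a ^ 2 * x ^ 2 with hQdef
  have hs0 : 0 ≤ s := neg_nonneg.2 (div_nonpos_of_nonpos_of_nonneg (by nlinarith) (by linarith))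
  have hQ : 0 < Q := by nlinarith
  have hB : ∀ l, 1 / (a * x / (1 + x)) * (a * (l - s)) = ((1 + x) * l + a * x) / x := fun l ↦ by
    rw [hs]
    field_simp
    ring
  have hpade : (1 + x) * (s * (6 + 3 * s) / (6 + 6 * s + s ^ 2)) + a * x
      = a ^ 2 * x ^ 2 * (a * x - 3 * (1 + x)) / Q := by
    have hL : s * (6 + 3 * s) / (6 + 6 * s + s ^ 2)
        = -(a * x) * (6 * (1 + x) - 3 * a * x) / Q := by
      rw [div_eq_div_iff (by positivity) hQ.ne', hs, hQdef]
      field_simp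
      ring
    rw [hL]
    field_simp
    rw [hQdef]
    ring
  rw [hB]
  calc ((1 + x) * log (1 + s) + a * x) / x * (a + 1 / 2 + (a + 1 / 6) * x)
      ≤ ((1 + x) * (s * (6 + 3 * s) / (6 + 6 * s + s ^ 2)) + a * x) / x *
          (a + 1 / 2 + (a + 1 / 6) * x) := by
        refine mul_le_mul_of_nonpos_right ?_ (R_denom_neg (by linarith) hx0).le
        gcongr
        exact div_le_log_one_add_of_nonneg hs0
    _ = (a + 1 / 2) ^ 2 * x + x * (a ^ 2 * (a * x - 3 * (1 + x)) * (a + 1 / 2 + (a + 1 / 6) * x)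
          - (a + 1 / 2) ^ 2 * Q) / Q := by
        rw [hpade]
        field_simp
        ring
    _ < (a + 1 / 2) ^ 2 * x := by
        have := div_neg_of_neg_of_pos
          (mul_neg_of_pos_of_neg hx0 (B_numerator_neg ha₁ ha₂ hx)) hQ
        linarith
end

theorem D_dominates_R_general (a : ℝ) (ha₁ : -(3 / 2) ≤ a) (ha₂ : a ≤ -(5 / 4))
    (r A B D R : ℝ → ℝ) (c₁ c₂ : ℝ)
    (hr : ∀ x : ℝ, r x = a * x / (1 + x))
    (hA : ∀ x : ℝ, x ≠ 0 → A x = x + r x + (1 / r x) * ∫ t in x..(0 : ℝ), r t)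
    (hB : ∀ x : ℝ, x ≠ 0 → B x = (1 / r x) * ∫ s in (-(r x))..(0 : ℝ), r s)
    (hD : ∀ x : ℝ, D x = if r x < -x then A x else B x)
    (hc₁ : c₁ = a + 1 / 2) (hc₂ : c₂ = -(2 * a + 1 / 3))
    (hR : ∀ x : ℝ, R x = c₁ ^ 2 * x / (c₁ - (c₂ / 2) * x)) :
    ∀ x : ℝ, 0 < x → R x < D x := by
  intro x hx
  have hden : c₁ - c₂ / 2 * x = a + 1 / 2 + (a + 1 / 6) * x := by rw [hc₁, hc₂]; ring
  rw [hR, hden, div_lt_iff_of_neg (R_denom_neg (by linarith) hx), hD, hc₁]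
  split_ifs with hregion
  · rw [hA x hx.ne']
    simp only [hr]
    rw [integral_mul_div_one_add (by linarith)]
    exact A_mul_R_denom_lt (by linarith) hx
  · have hrx : a * x / (1 + x) < 0 := div_neg_of_neg_of_pos (by nlinarith) (by linarith)
    have hx' : -(a + 1) ≤ x := by
      rw [hr, not_lt, le_div_iff₀ (by linarith)] at hregion
      nlinarith
    rw [hB x hx.ne']
    simp only [hr]
    rw [integral_mul_div_one_add (by linarith)]
    exact B_mul_R_denom_lt ha₁ ha₂ hx'

/-- Corollary 2.7 of [lprtt]: for a ∈ [-3/2, -5/4], with r(x) = ax/(1+x),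
A(x) = x + r(x) + (1/r(x))∫ₓ⁰ r(t)dt, B(x) = (1/r(x))∫_{-r(x)}^0 r(s)ds,
D(x) = A(x) if r(x) < -x and D(x) = B(x) if r(x) ≥ -x, and
R(x) = (A'(0))²x/(A'(0) - (A''(0)/2)x) with A'(0) = a + 1/2,
A''(0) = -(2a + 1/3), one has D(x) > R(x) for all x > 0. -/
theorem D_dominates_R (a : ℝ) (ha₁ : -(3 / 2) ≤ a) (ha₂ : a ≤ -(5 / 4))
    (r A B D R : ℝ → ℝ) (c₁ c₂ : ℝ)
    (hr : ∀ x : ℝ, r x = a * x / (1 + x))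
    (hA : ∀ x : ℝ, x ≠ 0 → A x = x + r x + (1 / r x) * ∫ t in x..(0 : ℝ), r t)
    (hA0 : A 0 = 0)
    (hB : ∀ x : ℝ, x ≠ 0 → B x = (1 / r x) * ∫ s in (-(r x))..(0 : ℝ), r s)
    (hB0 : B 0 = 0)
    (hD : ∀ x : ℝ, D x = if r x < -x then A x else B x)
    (hc₁ : c₁ = a + 1 / 2) (hc₂ : c₂ = -(2 * a + 1 / 3))
    (hR : ∀ x : ℝ, R x = c₁ ^ 2 * x / (c₁ - (c₂ / 2) * x)) :
    ∀ x : ℝ, 0 < x → R x < D x :=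
  D_dominates_R_general a ha₁ ha₂ r A B D R c₁ c₂ hr hA hB hD hc₁ hc₂ hR
end

section
/- Assume f satisfies hypotheses (H1)–(H3) with b = 1 and a < 0, and let x be a solution of x'(t) = f(t,x_t) on [α−1,∞) with m = liminf_{t→∞} x(t) < 0 < M = limsup_{t→∞} x(t). Then m ≥ D(M) and m ≥ r(−r(M)/2), where r(x) = ax/(1+x) and D is defined from A(x) = x + r(x) + (1/r(x))∫_x^0 r(t)dt and B(x) = (1/r(x))∫_{−r(x)}^0 r(s)ds by D(x) = A(x) if r(x) < −x and D(x) = B(x) if r(x) ≥ −x. -/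
/-!
Fix a level `K > limsup x` and put `C = -r(K) > 0`. Eventually `x ≤ K`, so by (H2)
`x' ≥ r(𝓜(x_t)) ≥ -C`: the solution decreases at rate at most `C`. Take `t` late with `x(t)`
close to `liminf x < 0`, and let `z` be the last zero of `x` before `t` following a positive
value. For `s ∈ [z, z + 1]` the slope bound gives `x ≤ min(K, C (z + 1 - s))` on `[s - 1, s]`,
hence `x(t) ≥ ∫_z^{z+1} r(min(K, C (z + 1 - s))) ds = ∫_0^1 r(min(K, C v)) dv`. This bound is
continuous in `K`, so it persists at `K = M`. Splitting the integral where `C v` reaches `K`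
evaluates it as `A(M)` or `B(M)`, according to which of `K` and `C` is smaller, and the
tangent line of the convex function `r` at `C / 2` bounds it below by `r(C / 2)`.
-/

open Set Filter MeasureTheory Topology

/-- The Yorke functional 𝓜(φ) = max{0, max_{s ∈ [-1,0]} φ(s)}. -/
noncomputable def yorkeM (φ : ℝ → ℝ) : ℝ := max 0 (sSup (φ '' Icc (-1 : ℝ) 0))

/-- Membership in the phase space C = C([-1,0], ℝ): we work with functions
ℝ → ℝ whose restriction to [-1,0] is continuous (only values on [-1,0] matter). -/
def InC (φ : ℝ → ℝ) : Prop := ContinuousOn φ (Icc (-1 : ℝ) 0)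

/-- The segment x_t(s) = x(t+s), s ∈ [-1,0]. -/
def seg (x : ℝ → ℝ) (t : ℝ) : ℝ → ℝ := fun s => x (t + s)

/-- Carathéodory condition: measurable in t for fixed φ, continuous in φ
(w.r.t. uniform distance on [-1,0]) for fixed t, locally dominated by an
integrable function. -/
def Caratheodory (f : ℝ → (ℝ → ℝ) → ℝ) : Prop :=
  (∀ φ, InC φ → Measurable fun t => f t φ) ∧
  (∀ t : ℝ, ∀ φ, InC φ → ∀ ε : ℝ, 0 < ε → ∃ δ : ℝ, 0 < δ ∧ ∀ ψ, InC ψ →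
      (∀ s ∈ Icc (-1 : ℝ) 0, |ψ s - φ s| ≤ δ) → |f t ψ - f t φ| ≤ ε) ∧
  (∀ t : ℝ, ∀ φ, InC φ → ∃ δ : ℝ, 0 < δ ∧ ∃ m : ℝ → ℝ,
      IntegrableOn m (Icc (t - δ) (t + δ)) ∧
      ∀ s ∈ Icc (t - δ) (t + δ), ∀ ψ, InC ψ →
        (∀ u ∈ Icc (-1 : ℝ) 0, |ψ u - φ u| ≤ δ) → |f s ψ| ≤ m s)

/-- (H1): f is Carathéodory and for every q there is ϑ(q) ≥ 0 dominating f(t,φ)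
a.e. in t whenever φ ≥ q on [-1,0]. -/
def HypH1 (f : ℝ → (ℝ → ℝ) → ℝ) (θ : ℝ → ℝ) : Prop :=
  Caratheodory f ∧
  ∀ q : ℝ, 0 ≤ θ q ∧
    ∀ φ, InC φ → (∀ s ∈ Icc (-1 : ℝ) 0, q ≤ φ s) →
      ∀ᵐ t : ℝ ∂volume, f t φ ≤ θ q

/-- (H2), the generalized Yorke condition with r(x) = ax/(1+bx):
r(𝓜(φ)) ≤ f(t,φ) for all φ, and f(t,φ) ≤ r(-𝓜(-φ)) for all φ with
min φ > -1/b (which is automatic when b = 0, since then b·φ(s) > -1 always). -/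
def HypH2 (f : ℝ → (ℝ → ℝ) → ℝ) (a b : ℝ) : Prop :=
  (∀ t : ℝ, ∀ φ, InC φ → a * yorkeM φ / (1 + b * yorkeM φ) ≤ f t φ) ∧
  (∀ t : ℝ, ∀ φ, InC φ → (∀ s ∈ Icc (-1 : ℝ) 0, -1 < b * φ s) →
      f t φ ≤ a * (-yorkeM fun s => -φ s) / (1 + b * (-yorkeM fun s => -φ s)))

/-- (H3): ∫₀^∞ f(s, p_s) ds diverges for every continuous p having a nonzero
limit at infinity. -/
def HypH3 (f : ℝ → (ℝ → ℝ) → ℝ) : Prop :=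
  ∀ p : ℝ → ℝ, ContinuousOn p (Ici (-1 : ℝ)) → ∀ L : ℝ, L ≠ 0 →
    Tendsto p atTop (𝓝 L) →
    ¬∃ I : ℝ, Tendsto (fun T => ∫ s in (0 : ℝ)..T, f s (seg p s)) atTop (𝓝 I)

/-- A solution of x'(t) = f(t, x_t) on [α-1, ω) (with ω ∈ (α, +∞]) with initial
time α: continuous on [α-1, ω) and satisfying the equivalent integral equation
(absolute continuity plus a.e. differential equation) on [α, ω). -/
def IsSolOn (f : ℝ → (ℝ → ℝ) → ℝ) (α : ℝ) (ω : EReal) (x : ℝ → ℝ) : Prop :=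
  (α : EReal) < ω ∧
  ContinuousOn x {t : ℝ | α - 1 ≤ t ∧ (t : EReal) < ω} ∧
  ∀ t : ℝ, α ≤ t → (t : EReal) < ω →
    IntervalIntegrable (fun s => f s (seg x s)) volume α t ∧
    x t = x α + ∫ s in α..t, f s (seg x s)

/-- A solution on its maximal interval of existence [α-1, ω): it admits no
extension to any strictly larger interval [α-1, ω'). -/
def IsMaximalSolOn (f : ℝ → (ℝ → ℝ) → ℝ) (α : ℝ) (ω : EReal) (x : ℝ → ℝ) : Prop :=
  IsSolOn f α ω x ∧
  ∀ ω' : EReal, ω < ω' → ∀ y : ℝ → ℝ, IsSolOn f α ω' y →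
    ¬∀ t : ℝ, α - 1 ≤ t → (t : EReal) < ω → y t = x t

/-- A (global) solution of x'(t) = f(t, x_t) on [α-1, +∞). -/
def IsGlobalSol (f : ℝ → (ℝ → ℝ) → ℝ) (α : ℝ) (x : ℝ → ℝ) : Prop :=
  ContinuousOn x (Ici (α - 1)) ∧
  ∀ t : ℝ, α ≤ t →
    IntervalIntegrable (fun s => f s (seg x s)) volume α t ∧
    x t = x α + ∫ s in α..t, f s (seg x s)

open intervalIntegral

noncomputable def yorkeR (a y : ℝ) : ℝ := a * y / (1 + y)

lemma continuousOn_yorkeR (a : ℝ) : ContinuousOn (yorkeR a) (Ioi (-1)) := by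
  intro y hy
  have : 1 + y ≠ 0 := by linarith [mem_Ioi.mp hy]
  unfold yorkeR
  fun_prop (disch := assumption)

lemma yorkeR_antitoneOn {a : ℝ} (ha : a ≤ 0) : AntitoneOn (yorkeR a) (Ioi (-1)) := by
  intro y hy z hz hyz
  simp only [mem_Ioi] at hy hz
  unfold yorkeR
  rw [div_le_div_iff₀ (by linarith) (by linarith)]
  nlinarith

lemma yorkeR_neg {a y : ℝ} (ha : a < 0) (hy : 0 < y) : yorkeR a y < 0 :=
  div_neg_of_neg_of_pos (mul_neg_of_neg_of_pos ha hy) (by linarith)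

lemma yorkeR_nonpos {a y : ℝ} (ha : a ≤ 0) (hy : 0 ≤ y) : yorkeR a y ≤ 0 :=
  div_nonpos_of_nonpos_of_nonneg (mul_nonpos_of_nonpos_of_nonneg ha hy) (by linarith)

lemma yorkeR_add_deriv_mul_le {a p y : ℝ} (ha : a ≤ 0) (hp : -1 < p) (hy : -1 < y) :
    yorkeR a p + a / (1 + p) ^ 2 * (y - p) ≤ yorkeR a y := by
  have hp' : 0 < 1 + p := by linarith
  have hy' : 0 < 1 + y := by linarith
  have hgap : yorkeR a y - (yorkeR a p + a / (1 + p) ^ 2 * (y - p))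
      = -a * (y - p) ^ 2 / ((1 + y) * (1 + p) ^ 2) := by
    unfold yorkeR
    field_simp
    ring
  have : 0 ≤ -a * (y - p) ^ 2 / ((1 + y) * (1 + p) ^ 2) := by
    apply div_nonneg (mul_nonneg (by linarith) (sq_nonneg _)) (by positivity)
  linarith

lemma continuousOn_yorkeR_min_mul (a : ℝ) {K C : ℝ} (hK : 0 ≤ K) (hC : 0 ≤ C) :
    ContinuousOn (fun v => yorkeR a (min K (C * v))) (Ici 0) :=
  ((continuousOn_yorkeR a).mono (Ici_subset_Ioi.2 neg_one_lt_zero)).comp (by fun_prop)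
    fun _ hv => le_min hK (mul_nonneg hC hv)

lemma integral_yorkeR_min_mul (a : ℝ) {K C : ℝ} (hK : 0 ≤ K) (hC : 0 < C) :
    ∫ v in (0 : ℝ)..1, yorkeR a (min K (C * v)) =
      (∫ y in (0 : ℝ)..min K C, yorkeR a y) / C + (1 - min K C / C) * yorkeR a (min K C) := by
  set μ := min K C
  have hv₀ : 0 ≤ μ / C := div_nonneg (le_min hK hC.le) hC.le
  have hv₀1 : μ / C ≤ 1 := (div_le_one hC).mpr (min_le_right _ _)
  have hCv₀ : C * (μ / C) = μ := by field_simp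
  have hint : ∀ b c : ℝ, 0 ≤ b → 0 ≤ c →
      IntervalIntegrable (fun v => yorkeR a (min K (C * v))) volume b c := fun b c hb hc =>
    ((continuousOn_yorkeR_min_mul a hK hC.le).mono fun _ hv =>
      le_trans (le_min hb hc) hv.1).intervalIntegrable
  have below : EqOn (fun v => yorkeR a (min K (C * v))) (fun v => yorkeR a (C * v))
      (uIcc 0 (μ / C)) := by
    intro v hv
    rw [uIcc_of_le hv₀] at hv
    have : C * v ≤ K := by
      calc C * v ≤ C * (μ / C) := mul_le_mul_of_nonneg_left hv.2 hC.le
        _ = μ := hCv₀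
        _ ≤ K := min_le_left _ _
    simp only [min_eq_right this]
  have above : EqOn (fun v => yorkeR a (min K (C * v))) (fun _ => yorkeR a μ)
      (uIcc (μ / C) 1) := by
    intro v hv
    rw [uIcc_of_le hv₀1] at hv
    have hle : min K (C * v) ≤ μ := min_le_min_left K (by nlinarith [hv.2])
    have hge : μ ≤ min K (C * v) :=
      le_min (min_le_left _ _) (hCv₀.ge.trans (mul_le_mul_of_nonneg_left hv.1 hC.le))
    simp only [le_antisymm hle hge]
  rw [← integral_add_adjacent_intervals (hint 0 (μ / C) le_rfl hv₀) (hint _ 1 hv₀ zero_le_one),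
    integral_congr below, integral_congr above,
    integral_comp_mul_left (fun y => yorkeR a y) hC.ne', mul_zero, hCv₀,
    intervalIntegral.integral_const, smul_eq_mul, smul_eq_mul]
  ring

lemma yorkeR_half_le_integral {a K C : ℝ} (ha : a ≤ 0) (hK : 0 ≤ K) (hC : 0 ≤ C) :
    yorkeR a (C / 2) ≤ ∫ v in (0 : ℝ)..1, yorkeR a (min K (C * v)) := by
  set s := a / (1 + C / 2) ^ 2
  have htangent : ∫ v in (0 : ℝ)..1, (yorkeR a (C / 2) + s * (C * v - C / 2))
      = yorkeR a (C / 2) := by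
    have : (fun v : ℝ => yorkeR a (C / 2) + s * (C * v - C / 2))
        = fun v => (yorkeR a (C / 2) - s * C / 2) + s * C * v := by
      ext v; ring
    rw [this, integral_add intervalIntegrable_const
      ((continuous_const_mul (s * C)).intervalIntegrable 0 1),
      intervalIntegral.integral_const_mul, intervalIntegral.integral_const, integral_id, smul_eq_mul]
    ring
  rw [← htangent]
  refine integral_mono_on zero_le_one ((by fun_prop : Continuous _).intervalIntegrable _ _)
    ((continuousOn_yorkeR_min_mul a hK hC).mono ?_).intervalIntegrable fun v hv => ?_
  · rw [uIcc_of_le zero_le_one]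
    exact fun _ hu => hu.1
  have hCv : 0 ≤ C * v := mul_nonneg hC hv.1
  calc yorkeR a (C / 2) + s * (C * v - C / 2) ≤ yorkeR a (C * v) :=
        yorkeR_add_deriv_mul_le ha (by linarith) (by linarith)
    _ ≤ yorkeR a (min K (C * v)) :=
        yorkeR_antitoneOn ha (show -1 < min K (C * v) by linarith [le_min hK hCv])
          (show -1 < C * v by linarith) (min_le_right _ _)

noncomputable def downcrossingBound (a K : ℝ) : ℝ :=
  ∫ v in (0 : ℝ)..1, yorkeR a (min K (-yorkeR a K * v))

lemma continuousOn_downcrossingBound {a : ℝ} (ha : a ≤ 0) :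
    ContinuousOn (downcrossingBound a) (Ici 0) := by
  have hr : ContinuousOn (yorkeR a) (Ici 0) :=
    (continuousOn_yorkeR a).mono (Ici_subset_Ioi.2 neg_one_lt_zero)
  have hrate : Continuous fun K : Ici (0 : ℝ) => -yorkeR a K :=
    (hr.comp_continuous continuous_subtype_val Subtype.prop).neg
  -- `max 0 v` makes the integrand continuous in `v` on all of `ℝ`.
  have hcont : Continuous (Function.uncurry fun (K : Ici (0 : ℝ)) (v : ℝ) =>
      yorkeR a (min K (-yorkeR a K * max 0 v))) :=
    hr.comp_continuous
      ((continuous_subtype_val.comp continuous_fst).min ((hrate.comp continuous_fst).mul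
        (continuous_const.max continuous_snd))) fun p =>
      le_min p.1.2 (mul_nonneg (neg_nonneg.mpr (yorkeR_nonpos ha p.1.2)) (le_max_left _ _))
  rw [continuousOn_iff_continuous_domRestrict]
  convert continuous_parametric_intervalIntegral_of_continuous' (μ := volume) hcont 0 1 using 1
  ext K
  refine integral_congr fun v hv => ?_
  rw [uIcc_of_le zero_le_one] at hv
  simp only [max_eq_right hv.1]

lemma downcrossingBound_eq_of_lt {a K : ℝ} (hK : 0 ≤ K) (h : yorkeR a K < -K) :
    downcrossingBound a K = K + yorkeR a K + 1 / yorkeR a K * ∫ t in K..(0 : ℝ), yorkeR a t := by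
  have hμ : min K (-yorkeR a K) = K := min_eq_left (by linarith)
  have hr : yorkeR a K ≠ 0 := by linarith
  rw [downcrossingBound, integral_yorkeR_min_mul a hK (by linarith), hμ, integral_symm]
  field_simp
  ring

lemma downcrossingBound_eq_of_le {a K : ℝ} (ha : a < 0) (hK : 0 < K) (h : -K ≤ yorkeR a K) :
    downcrossingBound a K = 1 / yorkeR a K * ∫ s in (-yorkeR a K)..(0 : ℝ), yorkeR a s := by
  have hr := yorkeR_neg ha hK
  have hμ : min K (-yorkeR a K) = -yorkeR a K := min_eq_right (by linarith)
  rw [downcrossingBound, integral_yorkeR_min_mul a hK.le (by linarith), hμ,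
    integral_symm (-yorkeR a K)]
  field_simp [hr.ne]
  ring

lemma yorkeM_nonneg (φ : ℝ → ℝ) : 0 ≤ yorkeM φ := le_max_left _ _

lemma yorkeM_seg_le {x : ℝ → ℝ} {t c : ℝ} (hc : 0 ≤ c) (h : ∀ w ∈ Icc (t - 1) t, x w ≤ c) :
    yorkeM (seg x t) ≤ c := by
  refine max_le hc (Real.sSup_le ?_ hc)
  rintro _ ⟨s, hs, rfl⟩
  exact h (t + s) ⟨by linarith [hs.1], by linarith [hs.2]⟩

lemma exists_eq_forall_lt_of_continuousOn {g : ℝ → ℝ} {a b c : ℝ} (hab : a ≤ b)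
    (hg : ContinuousOn g (Icc a b)) (ha : c ≤ g a) (hb : g b < c) :
    ∃ z ∈ Icc a b, g z = c ∧ ∀ s ∈ Ioc z b, g s < c := by
  set S := Icc a b ∩ g ⁻¹' Ici c
  have hS : IsClosed S := hg.preimage_isClosed_of_isClosed isClosed_Icc isClosed_Ici
  have hbdd : BddAbove S := ⟨b, fun s hs => hs.1.2⟩
  have hzS : sSup S ∈ S := hS.csSup_mem ⟨a, ⟨le_rfl, hab⟩, ha⟩ hbdd
  have hlast : ∀ s ∈ Ioc (sSup S) b, g s < c := fun s hs => not_le.mp fun hcs =>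
    (le_csSup hbdd (show s ∈ S from ⟨⟨hzS.1.1.trans hs.1.le, hs.2⟩, hcs⟩)).not_gt hs.1
  refine ⟨sSup S, hzS.1, ?_, hlast⟩
  obtain ⟨w, hw, hgw⟩ := intermediate_value_Icc' hzS.1.2
    (hg.mono (Icc_subset_Icc hzS.1.1 le_rfl)) ⟨hb.le, hzS.2⟩
  rcases hw.1.eq_or_lt with rfl | hlt
  · exact hgw
  · exact absurd hgw (hlast w ⟨hlt, hw.2⟩).ne

namespace IsGlobalSol

variable {f : ℝ → (ℝ → ℝ) → ℝ} {α a : ℝ} {x : ℝ → ℝ}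

lemma inC_seg (hx : IsGlobalSol f α x) {t : ℝ} (ht : α ≤ t) : InC (seg x t) :=
  hx.1.comp (by fun_prop) fun s hs => by simp only [mem_Ici]; linarith [hs.1]

lemma intervalIntegrable (hx : IsGlobalSol f α x) {s t : ℝ} (hs : α ≤ s) (ht : α ≤ t) :
    IntervalIntegrable (fun u => f u (seg x u)) volume s t :=
  (hx.2 s hs).1.symm.trans (hx.2 t ht).1

lemma sub_eq_integral (hx : IsGlobalSol f α x) {s t : ℝ} (hs : α ≤ s) (ht : α ≤ t) :
    x t - x s = ∫ u in s..t, f u (seg x u) := by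
  rw [(hx.2 t ht).2, (hx.2 s hs).2, add_sub_add_left_eq_sub,
    integral_interval_sub_left (hx.2 t ht).1 (hx.2 s hs).1]

lemma yorkeR_le (hx : IsGlobalSol f α x) (h2 : HypH2 f a 1) (ha : a ≤ 0) {t c : ℝ}
    (ht : α ≤ t) (hc : 0 ≤ c) (h : ∀ w ∈ Icc (t - 1) t, x w ≤ c) :
    yorkeR a c ≤ f t (seg x t) :=
  calc yorkeR a c ≤ yorkeR a (yorkeM (seg x t)) :=
        yorkeR_antitoneOn ha (show -1 < yorkeM (seg x t) by linarith [yorkeM_nonneg (seg x t)])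
          (show -1 < c by linarith) (yorkeM_seg_le hc h)
    _ ≤ f t (seg x t) := by simpa only [yorkeR, one_mul] using h2.1 t _ (hx.inC_seg ht)

lemma le_sub_yorkeR_mul (hx : IsGlobalSol f α x) (h2 : HypH2 f a 1) (ha : a ≤ 0) {T K : ℝ}
    (hT : α ≤ T) (hK : 0 ≤ K) (hxK : ∀ t, T ≤ t → x t ≤ K) {w t : ℝ} (hw : T + 1 ≤ w)
    (hwt : w ≤ t) : x w ≤ x t - yorkeR a K * (t - w) := by
  have hint : (t - w) * yorkeR a K ≤ ∫ u in w..t, f u (seg x u) := by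
    simpa using integral_mono_on hwt intervalIntegrable_const
      (hx.intervalIntegrable (by linarith) (by linarith)) fun s hs =>
      hx.yorkeR_le h2 ha (by linarith [hs.1]) hK fun u hu => hxK u (by linarith [hu.1, hs.1])
  linarith [hx.sub_eq_integral (show α ≤ w by linarith) (show α ≤ t by linarith)]

lemma le_min_of_downcrossing (hx : IsGlobalSol f α x) (h2 : HypH2 f a 1) (ha : a ≤ 0)
    {T K z t : ℝ} (hT : α ≤ T) (hK : 0 ≤ K) (hxK : ∀ s, T ≤ s → x s ≤ K) (hz : T + 2 ≤ z)
    (hxz : x z = 0) (hneg : ∀ s ∈ Ioc z t, x s < 0) {s : ℝ} (hs : s ∈ Icc z t) :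
    ∀ w ∈ Icc (s - 1) s, x w ≤ min K (-yorkeR a K * max 0 (z + 1 - s)) := by
  have hC : 0 ≤ -yorkeR a K := neg_nonneg.mpr (yorkeR_nonpos ha hK)
  intro w hw
  rcases le_or_gt w z with hwz | hwz
  · have hslope := hx.le_sub_yorkeR_mul h2 ha hT hK hxK (by linarith [hw.1, hs.1]) hwz
    refine le_min (hxK w (by linarith [hw.1, hs.1])) ?_
    calc x w ≤ -yorkeR a K * (z - w) := by linarith
      _ ≤ -yorkeR a K * max 0 (z + 1 - s) :=
        mul_le_mul_of_nonneg_left (le_max_of_le_right (by linarith [hw.1])) hC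
  · exact (hneg w ⟨hwz, hw.2.trans hs.2⟩).le.trans (le_min hK (mul_nonneg hC (le_max_left _ _)))

lemma downcrossingBound_le (hx : IsGlobalSol f α x) (h2 : HypH2 f a 1) (ha : a ≤ 0)
    {T K z t : ℝ} (hT : α ≤ T) (hK : 0 ≤ K) (hxK : ∀ s, T ≤ s → x s ≤ K) (hz : T + 2 ≤ z)
    (hzt : z ≤ t) (hxz : x z = 0) (hneg : ∀ s ∈ Ioc z t, x s < 0) :
    downcrossingBound a K ≤ x t := by
  set C := -yorkeR a K
  have hC : 0 ≤ C := neg_nonneg.mpr (yorkeR_nonpos ha hK)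
  set g := fun s => yorkeR a (min K (C * max 0 (z + 1 - s)))
  have hg_arg : ∀ s, 0 ≤ min K (C * max 0 (z + 1 - s)) := fun s =>
    le_min hK (mul_nonneg hC (le_max_left _ _))
  have hg : Continuous g := ((continuousOn_yorkeR a).mono (Ici_subset_Ioi.2 neg_one_lt_zero))
    |>.comp_continuous (by fun_prop) hg_arg
  have hg_nonpos : ∀ s, g s ≤ 0 := fun s => yorkeR_nonpos ha (hg_arg s)
  have hgF : ∀ s ∈ Icc z t, g s ≤ f s (seg x s) := fun s hs =>
    hx.yorkeR_le h2 ha (by linarith [hs.1]) (hg_arg s)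
      (hx.le_min_of_downcrossing h2 ha hT hK hxK hz hxz hneg hs)
  have hg_eq : ∫ s in z..z + 1, g s = downcrossingBound a K := by
    rw [integral_comp_sub_left (fun v => yorkeR a (min K (C * max 0 v))), sub_self,
      add_sub_cancel_left, downcrossingBound]
    refine integral_congr fun v hv => ?_
    rw [uIcc_of_le zero_le_one] at hv
    simp only [max_eq_right hv.1, C]
  have hg_le : ∫ s in z..z + 1, g s ≤ ∫ s in z..t, g s := by
    rcases le_or_gt t (z + 1) with htz | htz
    · have htail : ∫ s in t..z + 1, g s ≤ 0 := by
        simpa using integral_mono_on htz (hg.intervalIntegrable _ _)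
          intervalIntegrable_const fun s _ => hg_nonpos s
      rw [← integral_add_adjacent_intervals (hg.intervalIntegrable z t)
        (hg.intervalIntegrable t (z + 1))]
      linarith
    · have htail : ∫ s in z + 1..t, g s = 0 := by
        refine (integral_congr fun s hs => ?_).trans integral_zero
        rw [uIcc_of_le htz.le] at hs
        simp [g, max_eq_left (show z + 1 - s ≤ 0 by linarith [hs.1]), min_eq_right hK, yorkeR]
      rw [← integral_add_adjacent_intervals (hg.intervalIntegrable z (z + 1))
        (hg.intervalIntegrable (z + 1) t), htail, add_zero]
  calc downcrossingBound a K = ∫ s in z..z + 1, g s := hg_eq.symm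
    _ ≤ ∫ s in z..t, g s := hg_le
    _ ≤ ∫ s in z..t, f s (seg x s) := integral_mono_on hzt
        (hg.intervalIntegrable z t) (hx.intervalIntegrable (by linarith) (by linarith)) hgF
    _ = x t := by rw [← hx.sub_eq_integral (by linarith) (by linarith), hxz, sub_zero]

lemma downcrossingBound_le_liminf (hx : IsGlobalSol f α x) (h2 : HypH2 f a 1) (ha : a ≤ 0)
    (hxbdd₁ : IsBoundedUnder (· ≤ ·) atTop x) (hxbdd₂ : IsBoundedUnder (· ≥ ·) atTop x)
    (hm0 : liminf x atTop < 0) (hM0 : 0 < limsup x atTop) {K : ℝ} (hK : limsup x atTop < K) :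
    downcrossingBound a K ≤ liminf x atTop := by
  obtain ⟨T₀, hT₀⟩ := eventually_atTop.mp (eventually_lt_of_limsup_lt hK hxbdd₁)
  set T := max T₀ α
  have hxK : ∀ s, T ≤ s → x s ≤ K := fun s hs => (hT₀ s (le_of_max_le_left hs)).le
  obtain ⟨u, hu, hxu⟩ := frequently_atTop.mp
    (frequently_lt_of_lt_limsup hxbdd₂.isCoboundedUnder_le hM0) (T + 2)
  refine le_of_forall_gt_imp_ge_of_dense fun c hc => ?_
  obtain ⟨t, hut, hxt⟩ := frequently_atTop.mp
    (frequently_lt_of_liminf_lt hxbdd₁.isCoboundedUnder_ge (lt_min hc hm0)) u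
  have hcont : ContinuousOn x (Icc u t) := hx.1.mono fun s hs => by
    simp only [mem_Ici]; linarith [hs.1, le_max_right T₀ α]
  obtain ⟨z, hz, hxz, hneg⟩ :=
    exists_eq_forall_lt_of_continuousOn hut hcont hxu.le (hxt.trans_le (min_le_right _ _))
  calc downcrossingBound a K
      ≤ x t := hx.downcrossingBound_le h2 ha (le_max_right _ _) (hM0.trans hK).le hxK
        (hu.trans hz.1) hz.2 hxz hneg
    _ ≤ c := hxt.le.trans (min_le_left _ _)

end IsGlobalSol

theorem liminf_lower_bounds_general
    (f : ℝ → (ℝ → ℝ) → ℝ) (a : ℝ) (ha : a < 0)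
    (h2 : HypH2 f a 1)
    (r A B D : ℝ → ℝ)
    (hr : ∀ x : ℝ, r x = a * x / (1 + x))
    (hA : ∀ x : ℝ, x ≠ 0 → A x = x + r x + (1 / r x) * ∫ t in x..(0 : ℝ), r t)
    (hB : ∀ x : ℝ, x ≠ 0 → B x = (1 / r x) * ∫ s in (-(r x))..(0 : ℝ), r s)
    (hD : ∀ x : ℝ, D x = if r x < -x then A x else B x)
    (α : ℝ) (x : ℝ → ℝ) (hx : IsGlobalSol f α x)
    (hxbdd₁ : IsBoundedUnder (· ≤ ·) atTop x)
    (hxbdd₂ : IsBoundedUnder (· ≥ ·) atTop x)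
    (m M : ℝ) (hm : m = liminf x atTop) (hM : M = limsup x atTop)
    (hm0 : m < 0) (hM0 : 0 < M) :
    D M ≤ m ∧ r (-(r M) / 2) ≤ m := by
  obtain rfl : r = yorkeR a := funext hr
  subst hm hM
  have hbound : downcrossingBound a (limsup x atTop) ≤ liminf x atTop :=
    le_of_tendsto
      (((continuousOn_downcrossingBound ha.le).continuousWithinAt hM0.le).mono
        (Ioi_subset_Ici hM0.le))
      (eventually_nhdsWithin_of_forall fun K hK =>
        hx.downcrossingBound_le_liminf h2 ha.le hxbdd₁ hxbdd₂ hm0 hM0 hK)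
  refine ⟨?_, (yorkeR_half_le_integral ha.le hM0.le
    (neg_nonneg.mpr (yorkeR_nonpos ha.le hM0.le))).trans hbound⟩
  rw [hD]
  split_ifs with h
  · rwa [hA _ hM0.ne', ← downcrossingBound_eq_of_lt hM0.le h]
  · rwa [hB _ hM0.ne', ← downcrossingBound_eq_of_le ha hM0 (not_lt.mp h)]

/-- Lemma 2.5: under (H1)-(H3) with b = 1, for a solution with
m = liminf x < 0 < M = limsup x, one has m ≥ D(M) and m ≥ r(-r(M)/2). -/
theorem liminf_lower_bounds
    (f : ℝ → (ℝ → ℝ) → ℝ) (θ : ℝ → ℝ) (a : ℝ) (ha : a < 0)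
    (h1 : HypH1 f θ) (h2 : HypH2 f a 1) (h3 : HypH3 f)
    (r A B D : ℝ → ℝ)
    (hr : ∀ x : ℝ, r x = a * x / (1 + x))
    (hA : ∀ x : ℝ, x ≠ 0 → A x = x + r x + (1 / r x) * ∫ t in x..(0 : ℝ), r t)
    (hA0 : A 0 = 0)
    (hB : ∀ x : ℝ, x ≠ 0 → B x = (1 / r x) * ∫ s in (-(r x))..(0 : ℝ), r s)
    (hB0 : B 0 = 0)
    (hD : ∀ x : ℝ, D x = if r x < -x then A x else B x)
    (α : ℝ) (x : ℝ → ℝ) (hx : IsGlobalSol f α x)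
    (hxbdd₁ : IsBoundedUnder (· ≤ ·) atTop x)
    (hxbdd₂ : IsBoundedUnder (· ≥ ·) atTop x)
    (m M : ℝ) (hm : m = liminf x atTop) (hM : M = limsup x atTop)
    (hm0 : m < 0) (hM0 : 0 < M) :
    D M ≤ m ∧ r (-(r M) / 2) ≤ m :=
  liminf_lower_bounds_general f a ha h2 r A B D hr hA hB hD α x hx hxbdd₁ hxbdd₂ m M hm hM hm0 hM0
end
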